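/- For n >= 2, the total number of ties over all Cayley permutations of length n is (n-1) * Fub_{n-1}. -/

import Mathlib

/-- A Cayley permutation of length `n`, encoded with 0-indexed values (value `k : Fin n`
represents the positive integer `k+1`): if a value appears then all smaller values
appear. -/
def IsCayley (n : ℕ) (w : Fin n → Fin n) : Prop :=
  ∀ (i : Fin n) (v : Fin n), v ≤ w i → ∃ j, w j = v

instance (n : ℕ) : DecidablePred (IsCayley n) := fun _ => by unfold IsCayley; infer_instance

/-- `Fub m` is the number of Cayley permutations of length `m` (the `m`-th Fubini
number). -/
def Fub (m : ℕ) : ℕ :=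
  (Finset.univ.filter (fun w : Fin m → Fin m => IsCayley m w)).card

/-- The number of ties of a word: indices `i ∈ [n-1]` with `w i = w (i+1)`. -/
def tieCount (n : ℕ) (w : Fin n → Fin n) : ℕ :=
  (Finset.univ.filter
    (fun p : Fin n × Fin n => (p.1 : ℕ) + 1 = (p.2 : ℕ) ∧ w p.1 = w p.2)).card

/-!
Fix a position `i`. Duplicating the letter at position `i` of a Cayley permutation of length
`n - 1` gives a Cayley permutation of length `n` with a tie at `i`, and deleting one letter of
that tie undoes it: a Cayley word with a repeated letter misses the value `n`, so its values
fit back into `Fin (n - 1)`. Hence every position is a tie in exactly `Fub (n - 1)` Cayley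
permutations, and summing over the `n - 1` positions counts all ties.
-/

open Finset Function

lemma isCayley_iff_isLowerSet_range {n : ℕ} (w : Fin n → Fin n) :
    IsCayley n w ↔ IsLowerSet (Set.range w) := by
  constructor
  · rintro hw _ b hb ⟨i, rfl⟩
    exact hw i b hb
  · intro hw i v hv
    exact hw hv ⟨i, rfl⟩

lemma isLowerSet_image_castSucc_iff {m : ℕ} {s : Set (Fin m)} :
    IsLowerSet (Fin.castSucc '' s) ↔ IsLowerSet s := by
  constructor
  · intro hs a b hba ha
    obtain ⟨c, hc, hcb⟩ := hs (Fin.castSucc_le_castSucc_iff.mpr hba) ⟨a, ha, rfl⟩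
    rwa [← Fin.castSucc_injective m hcb]
  · rintro hs _ b hb ⟨a, ha, rfl⟩
    have hb_ne : b ≠ Fin.last m := (Fin.lt_of_le_of_lt hb (Fin.castSucc_lt_last a)).ne
    refine ⟨b.castPred hb_ne, hs ?_ ha, Fin.castSucc_castPred b hb_ne⟩
    rwa [← Fin.castSucc_le_castSucc_iff, Fin.castSucc_castPred]

lemma isCayley_castSucc_comp_iff {m : ℕ} {σ : Fin (m + 1) → Fin m} (hσ : Surjective σ)
    (u : Fin m → Fin m) : IsCayley (m + 1) (Fin.castSucc ∘ u ∘ σ) ↔ IsCayley m u := by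
  rw [isCayley_iff_isLowerSet_range, isCayley_iff_isLowerSet_range, Set.range_comp,
    hσ.range_comp, isLowerSet_image_castSucc_iff]

lemma IsCayley.injective_of_apply_eq_last {m : ℕ} {w : Fin (m + 1) → Fin (m + 1)}
    (hw : IsCayley (m + 1) w) {j : Fin (m + 1)} (hj : w j = Fin.last m) : Injective w :=
  Finite.injective_iff_surjective.mpr fun v => hw j v (hj ▸ Fin.le_last v)

lemma tieCount_succ {m : ℕ} (w : Fin (m + 1) → Fin (m + 1)) :
    tieCount (m + 1) w = #{i : Fin m | w i.castSucc = w i.succ} := by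
  symm
  refine card_nbij (fun i => (i.castSucc, i.succ)) ?_ ?_ ?_
  · intro i hi
    simpa [tieCount] using hi
  · intro i _ j _ hij
    exact Fin.castSucc_injective m (congrArg Prod.fst hij)
  · rintro ⟨p, q⟩ hpq
    simp only [coe_filter, mem_univ, true_and, Set.mem_ofPred_eq] at hpq
    obtain ⟨hsucc, htie⟩ := hpq
    obtain ⟨i, rfl, rfl⟩ : ∃ i : Fin m, i.castSucc = p ∧ i.succ = q :=
      ⟨⟨p, by omega⟩, rfl, Fin.ext (by simp [← hsucc])⟩
    exact ⟨i, by simpa using htie, rfl⟩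

lemma card_isCayley_tie_at {m : ℕ} (i : Fin m) :
    #{w : Fin (m + 1) → Fin (m + 1) | IsCayley (m + 1) w ∧ w i.castSucc = w i.succ} = Fub m := by
  symm
  refine card_nbij (fun u => Fin.castSucc ∘ u ∘ i.predAbove) ?_ ?_ ?_
  · intro u hu
    simp only [coe_filter, mem_univ, true_and, Set.mem_ofPred_eq] at hu ⊢
    refine ⟨(isCayley_castSucc_comp_iff i.predAbove_surjective u).mpr hu, ?_⟩
    simp
  · intro u _ v _ huv
    exact (Fin.castSucc_injective m).comp_left (i.predAbove_surjective.injective_comp_right huv)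
  · intro w hw
    simp only [coe_filter, mem_univ, true_and, Set.mem_ofPred_eq] at hw
    obtain ⟨hw, htie⟩ := hw
    have hne_last : ∀ j, w j ≠ Fin.last m := fun j hj =>
      (Fin.castSucc_lt_succ (i := i)).ne (hw.injective_of_apply_eq_last hj htie)
    -- delete the first letter of the tie
    set u : Fin m → Fin m := fun j => (w (i.castSucc.succAbove j)).castPred (hne_last _)
    have hw_eq : Fin.castSucc ∘ u ∘ i.predAbove = w := by
      funext j
      simp only [u, comp_apply, Fin.castSucc_castPred]
      by_cases hj : j = i.castSucc
      · simp [hj, htie]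
      · rw [Fin.succAbove_predAbove hj]
    refine ⟨u, ?_, hw_eq⟩
    simpa using (isCayley_castSucc_comp_iff i.predAbove_surjective u).mp (hw_eq ▸ hw)

theorem total_ties_cayley_general (n : ℕ) :
    ∑ w ∈ Finset.univ.filter (fun w : Fin n → Fin n => IsCayley n w), tieCount n w =
      (n - 1) * Fub (n - 1) := by
  cases n with
  | zero => simp [tieCount]
  | succ m =>
    calc ∑ w ∈ univ.filter (IsCayley (m + 1)), tieCount (m + 1) w
        = ∑ w ∈ univ.filter (IsCayley (m + 1)), #{i : Fin m | w i.castSucc = w i.succ} := by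
          simp only [tieCount_succ]
      _ = ∑ i : Fin m, #{w ∈ univ.filter (IsCayley (m + 1)) | w i.castSucc = w i.succ} :=
          sum_card_bipartiteAbove_eq_sum_card_bipartiteBelow _
      _ = (m + 1 - 1) * Fub (m + 1 - 1) := by
          simp [filter_filter, card_isCayley_tie_at]

/-- For `n ≥ 2`, the total number of ties over all Cayley permutations of length
`n` is `(n-1) · Fub (n-1)`. -/
theorem total_ties_cayley (n : ℕ) (hn : 2 ≤ n) :
    ∑ w ∈ Finset.univ.filter (fun w : Fin n → Fin n => IsCayley n w), tieCount n w =
      (n - 1) * Fub (n - 1) :=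
  total_ties_cayley_general n
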